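/- arXiv:1712.07793 — 7 statements merged into one kernel-verified Lean document; each statement's English description precedes it below -/
import Mathlib

section
/- Let V be a nonnegative adapted process satisfying E[V(k+1) | F_k] ≤ (1 - κ̂)V(k) + ψ̂ for constants 0 < κ̂ < 1 and ψ̂ ≥ 0. If α ≥ ψ̂/κ̂, then P(sup_{0 ≤ k ≤ T} V(k) ≥ α | V(0) = v) ≤ 1 - (1 - v/α)(1 - ψ̂/α)^T. -/
/-!
Let `A n` be the event that `V` stays below `α` up to time `n`. On `A n`, the drift condition
together with `ψ̂ / α ≤ κ̂` (equivalent to `α ≥ ψ̂ / κ̂`) and `V ≥ 0` gives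
`E[α - V(n+1) | F_n] ≥ (1 - ψ̂/α)(α - V n)`; since `A n` is `F_n`-measurable and `α - V(n+1) ≤ 0`
on `A n \ A (n+1)`, the "slack" `∫_{A n} (α - V n)` gets multiplied by at least `1 - ψ̂/α` at
each step. Starting from `α - v`, after `T` steps it is at least `(α - v)(1 - ψ̂/α)^T`, while it is
at most `α P(A T)`.
-/

open MeasureTheory

section

variable {Ω : Type*} {mΩ : MeasurableSpace Ω} {μ : Measure Ω}

theorem setIntegral_le_setIntegral_of_condExp_le {m : MeasurableSpace Ω} (hm : m ≤ mΩ)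
    [SigmaFinite (μ.trim hm)] {f g : Ω → ℝ} (hf : Integrable f μ) (hg : Integrable g μ)
    (hfg : μ[f|m] ≤ᵐ[μ] g) {s : Set Ω} (hs : MeasurableSet[m] s) :
    ∫ ω in s, f ω ∂μ ≤ ∫ ω in s, g ω ∂μ := by
  rw [← setIntegral_condExp hm hf hs]
  exact setIntegral_mono_ae integrable_condExp.integrableOn hg.integrableOn hfg

theorem setIntegral_le_setIntegral_of_subset_of_nonpos {s t : Set Ω} {f : Ω → ℝ}
    (hs : MeasurableSet s) (ht : MeasurableSet t) (hts : t ⊆ s) (hf : IntegrableOn f s μ)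
    (hnonpos : ∀ ω ∈ s \ t, f ω ≤ 0) :
    ∫ ω in s, f ω ∂μ ≤ ∫ ω in t, f ω ∂μ := by
  have hdiff := setIntegral_sdiff ht hf hts
  have := setIntegral_nonpos (μ := μ) (hs.diff ht) hnonpos
  linarith

def survivalSet (V : ℕ → Ω → ℝ) (α : ℝ) (n : ℕ) : Set Ω := {ω | ∀ k ≤ n, V k ω < α}

variable {V : ℕ → Ω → ℝ} {α : ℝ}

theorem measurableSet_survivalSet {ℱ : Filtration ℕ mΩ} (hadp : Adapted ℱ V) (n : ℕ) :
    MeasurableSet[ℱ n] (survivalSet V α n) := by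
  simp only [survivalSet, Set.ofPred_forall]
  exact MeasurableSet.iInter fun k => MeasurableSet.iInter fun hkn =>
    measurableSet_lt ((hadp k).mono (ℱ.mono hkn) le_rfl) measurable_const

theorem survivalSet_succ_subset (n : ℕ) : survivalSet V α (n + 1) ⊆ survivalSet V α n :=
  fun _ hω k hk => hω k (hk.trans n.le_succ)

theorem le_of_mem_survivalSet_diff {n : ℕ} {ω : Ω}
    (hω : ω ∈ survivalSet V α n \ survivalSet V α (n + 1)) : α ≤ V (n + 1) ω := by
  obtain ⟨hin, hout⟩ := hω
  simp only [survivalSet, Set.mem_ofPred_eq, not_forall, not_lt] at hout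
  obtain ⟨k, hk, hαk⟩ := hout
  rcases Nat.of_le_succ hk with hkn | rfl
  · exact absurd (hin k hkn) (not_lt.mpr hαk)
  · exact hαk

theorem le_of_notMem_survivalSet_zero {ω : Ω} (hω : ω ∉ survivalSet V α 0) : α ≤ V 0 ω := by
  simpa [survivalSet] using hω

theorem compl_survivalSet (n : ℕ) :
    (survivalSet V α n)ᶜ = {ω | ∃ k ≤ n, α ≤ V k ω} := by
  ext ω
  simp [survivalSet]

theorem one_sub_div_mul_sub_le {κ ψ x : ℝ} (hα : 0 < α) (hψκ : ψ / α ≤ κ) (hx : 0 ≤ x) :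
    (1 - ψ / α) * (α - x) ≤ α - ((1 - κ) * x + ψ) := by
  have hexpand : (1 - ψ / α) * (α - x) = α - x - ψ + ψ / α * x := by
    field_simp
    ring
  linarith [mul_le_mul_of_nonneg_right hψκ hx]

variable {ℱ : Filtration ℕ mΩ} {κ ψ : ℝ}

theorem mul_setIntegral_survivalSet_le_succ [IsFiniteMeasure μ] (hadp : Adapted ℱ V)
    (hint : ∀ k, Integrable (V k) μ) (hnn : ∀ k ω, 0 ≤ V k ω)
    (hdrift : ∀ k, μ[V (k + 1)|ℱ k] ≤ᵐ[μ] fun ω => (1 - κ) * V k ω + ψ)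
    (hα : 0 < α) (hψκ : ψ / α ≤ κ) (n : ℕ) :
    (1 - ψ / α) * ∫ ω in survivalSet V α n, (α - V n ω) ∂μ
      ≤ ∫ ω in survivalSet V α (n + 1), (α - V (n + 1) ω) ∂μ := by
  set A := survivalSet V α
  have hA : ∀ n, MeasurableSet (A n) := fun n => ℱ.le n _ (measurableSet_survivalSet hadp n)
  have hbound : Integrable (fun ω => (1 - κ) * V n ω + ψ) μ :=
    ((hint n).const_mul _).add (integrable_const _)
  have hdrift_on : ∫ ω in A n, V (n + 1) ω ∂μ ≤ ∫ ω in A n, ((1 - κ) * V n ω + ψ) ∂μ :=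
    setIntegral_le_setIntegral_of_condExp_le (ℱ.le n) (hint (n + 1)) hbound (hdrift n)
      (measurableSet_survivalSet hadp n)
  calc (1 - ψ / α) * ∫ ω in A n, (α - V n ω) ∂μ
      = ∫ ω in A n, (1 - ψ / α) * (α - V n ω) ∂μ := (integral_const_mul _ _).symm
    _ ≤ ∫ ω in A n, (α - ((1 - κ) * V n ω + ψ)) ∂μ :=
        setIntegral_mono (((integrable_const α).sub (hint n)).const_mul _).integrableOn
          ((integrable_const α).sub hbound).integrableOn
          fun ω => one_sub_div_mul_sub_le hα hψκ (hnn n ω)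
    _ ≤ ∫ ω in A n, (α - V (n + 1) ω) ∂μ := by
        rw [integral_sub (integrable_const α).integrableOn hbound.integrableOn,
          integral_sub (integrable_const α).integrableOn (hint (n + 1)).integrableOn]
        exact sub_le_sub_left hdrift_on _
    _ ≤ ∫ ω in A (n + 1), (α - V (n + 1) ω) ∂μ :=
        setIntegral_le_setIntegral_of_subset_of_nonpos (hA n) (hA (n + 1))
          (survivalSet_succ_subset n) ((integrable_const α).sub (hint (n + 1))).integrableOn
          fun ω hω => sub_nonpos.mpr (le_of_mem_survivalSet_diff hω)

theorem pow_mul_le_setIntegral_survivalSet [IsProbabilityMeasure μ] (hadp : Adapted ℱ V)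
    (hint : ∀ k, Integrable (V k) μ) (hnn : ∀ k ω, 0 ≤ V k ω)
    (hdrift : ∀ k, μ[V (k + 1)|ℱ k] ≤ᵐ[μ] fun ω => (1 - κ) * V k ω + ψ)
    (hα : 0 < α) (hψκ : ψ / α ≤ κ) (hq : 0 ≤ 1 - ψ / α) {v : ℝ} (hV0 : ∀ ω, V 0 ω = v)
    (n : ℕ) :
    (1 - ψ / α) ^ n * (α - v) ≤ ∫ ω in survivalSet V α n, (α - V n ω) ∂μ := by
  induction n with
  | zero =>
    have hstart := setIntegral_le_setIntegral_of_subset_of_nonpos (μ := μ) MeasurableSet.univ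
      (ℱ.le 0 _ (measurableSet_survivalSet hadp 0)) (Set.subset_univ _)
      ((integrable_const α).sub (hint 0)).integrableOn
      fun ω hω => sub_nonpos.mpr (le_of_notMem_survivalSet_zero hω.2)
    simpa [hV0] using hstart
  | succ n ih =>
    calc (1 - ψ / α) ^ (n + 1) * (α - v) = (1 - ψ / α) * ((1 - ψ / α) ^ n * (α - v)) := by ring
      _ ≤ (1 - ψ / α) * ∫ ω in survivalSet V α n, (α - V n ω) ∂μ :=
          mul_le_mul_of_nonneg_left ih hq
      _ ≤ _ := mul_setIntegral_survivalSet_le_succ hadp hint hnn hdrift hα hψκ n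

theorem setIntegral_survivalSet_le_mul_measureReal [IsFiniteMeasure μ]
    (hint : ∀ k, Integrable (V k) μ)
    (hnn : ∀ k ω, 0 ≤ V k ω) (n : ℕ) :
    ∫ ω in survivalSet V α n, (α - V n ω) ∂μ ≤ α * μ.real (survivalSet V α n) := by
  calc ∫ ω in survivalSet V α n, (α - V n ω) ∂μ ≤ ∫ _ in survivalSet V α n, α ∂μ :=
        setIntegral_mono ((integrable_const α).sub (hint n)).integrableOn
          (integrable_const α).integrableOn fun ω => by linarith [hnn n ω]
    _ = α * μ.real (survivalSet V α n) := by rw [setIntegral_const, smul_eq_mul, mul_comm]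

end

theorem stmt_1_general {Ω : Type*} {mΩ : MeasurableSpace Ω} {μ : Measure Ω}
    [IsProbabilityMeasure μ] (ℱ : Filtration ℕ mΩ) (V : ℕ → Ω → ℝ)
    (hadp : Adapted ℱ V) (hint : ∀ k, Integrable (V k) μ)
    (hnn : ∀ k ω, 0 ≤ V k ω)
    (κhat ψhat : ℝ) (hκ0 : 0 < κhat) (hκ1 : κhat < 1)
    (hdrift : ∀ k, μ[V (k + 1)|ℱ k] ≤ᵐ[μ] fun ω => (1 - κhat) * V k ω + ψhat)
    (T : ℕ) (α v : ℝ) (hα : 0 < α)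
    (hV0 : ∀ ω, V 0 ω = v) (hcase : ψhat / κhat ≤ α) :
    (μ {ω | ∃ k ≤ T, α ≤ V k ω}).toReal
      ≤ 1 - (1 - v / α) * (1 - ψhat / α) ^ T := by
  have hψκ : ψhat / α ≤ κhat := by
    rw [div_le_iff₀ hκ0] at hcase
    rw [div_le_iff₀ hα]
    linarith
  have hq : 0 ≤ 1 - ψhat / α := by linarith
  have hslack : (1 - ψhat / α) ^ T * (α - v) ≤ α * μ.real (survivalSet V α T) :=
    (pow_mul_le_setIntegral_survivalSet hadp hint hnn hdrift hα hψκ hq hV0 T).trans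
      (setIntegral_survivalSet_le_mul_measureReal hint hnn T)
  have hexit : μ.real {ω | ∃ k ≤ T, α ≤ V k ω} = 1 - μ.real (survivalSet V α T) := by
    rw [← compl_survivalSet,
      probReal_compl_eq_one_sub (ℱ.le T _ (measurableSet_survivalSet hadp T))]
  have hrescale : (1 - v / α) * (1 - ψhat / α) ^ T = (1 - ψhat / α) ^ T * (α - v) / α := by
    field_simp
  have hsurvive : (1 - ψhat / α) ^ T * (α - v) / α ≤ μ.real (survivalSet V α T) :=
    (div_le_iff₀' hα).mpr hslack
  change μ.real _ ≤ _
  rw [hexit, hrescale]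
  linarith

/-- Finite-horizon probability bound for a nonnegative process with drift
`E[V(k+1) | F_k] ≤ (1 - κ̂) V(k) + ψ̂`, in the case `α ≥ ψ̂/κ̂`:
`P(sup_{0 ≤ k ≤ T} V(k) ≥ α | V 0 = v) ≤ 1 - (1 - v/α)(1 - ψ̂/α)^T`. -/
theorem stmt_1 {Ω : Type*} {mΩ : MeasurableSpace Ω} {μ : Measure Ω}
    [IsProbabilityMeasure μ] (ℱ : Filtration ℕ mΩ) (V : ℕ → Ω → ℝ)
    (hadp : Adapted ℱ V) (hint : ∀ k, Integrable (V k) μ)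
    (hnn : ∀ k ω, 0 ≤ V k ω)
    (κhat ψhat : ℝ) (hκ0 : 0 < κhat) (hκ1 : κhat < 1) (hψ : 0 ≤ ψhat)
    (hdrift : ∀ k, μ[V (k + 1)|ℱ k] ≤ᵐ[μ] fun ω => (1 - κhat) * V k ω + ψhat)
    (T : ℕ) (α v : ℝ) (hα : 0 < α) (hv0 : 0 ≤ v) (hvα : v ≤ α)
    (hV0 : ∀ ω, V 0 ω = v) (hcase : ψhat / κhat ≤ α) :
    (μ {ω | ∃ k ≤ T, α ≤ V k ω}).toReal
      ≤ 1 - (1 - v / α) * (1 - ψhat / α) ^ T :=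
  stmt_1_general ℱ V hadp hint hnn κhat ψhat hκ0 hκ1 hdrift T α v hα hV0 hcase
end

section
/- Let V be a nonnegative adapted process satisfying E[V(k+1) | F_k] ≤ (1 - κ̂)V(k) + ψ̂ for constants 0 < κ̂ < 1 and ψ̂ ≥ 0. If α < ψ̂/κ̂, then P(sup_{0 ≤ k ≤ T} V(k) ≥ α | V(0) = v) ≤ (v/α)(1 - κ̂)^T + (ψ̂/(κ̂ α))(1 - (1 - κ̂)^T). -/
/-!
The process `M k = (1-κ̂)^(T-k) V(k) + ψ̂ ∑_{j<T-k} (1-κ̂)^j`, kept constant after time `T`, is a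
nonnegative supermartingale: iterating the drift condition from time `k` to `T` bounds
`E[V T | F_k]` by `M k`. Since `α (1-κ̂) + ψ̂ ≥ α` when `κ̂ α ≤ ψ̂`, the same geometric
recursion shows `M k ≥ α` whenever `k ≤ T` and `V k ≥ α`, so the event in question is contained in
`{max_{k ≤ T} M k ≥ α}`. Ville's maximal inequality for nonnegative supermartingales, obtained
by optional stopping at the first time `M` reaches `α`, bounds its probability by
`E[M 0] / α`, and `E[M 0]` is exactly the right-hand side times `α`.
-/

open MeasureTheory Finset
open scoped ProbabilityTheory

theorem le_pow_mul_add_mul_geom_sum {q ψ α : ℝ} (hq : 0 ≤ q) (hα : (1 - q) * α ≤ ψ) (m : ℕ) :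
    α ≤ q ^ m * α + ψ * ∑ j ∈ range m, q ^ j := by
  induction m with
  | zero => simp
  | succ m ih =>
    have hstep : q ^ m * α ≤ q ^ (m + 1) * α + ψ * q ^ m := by
      have := mul_le_mul_of_nonneg_left hα (pow_nonneg hq m)
      rw [pow_succ]
      linarith
    rw [sum_range_succ, mul_add]
    linarith

namespace MeasureTheory

variable {Ω : Type*} {mΩ : MeasurableSpace Ω} {μ : Measure Ω} {ℱ : Filtration ℕ mΩ}

theorem Supermartingale.integral_stoppedValue_le_integral_zero [IsFiniteMeasure μ]
    {f : ℕ → Ω → ℝ} (hf : Supermartingale f ℱ μ) {τ : Ω → ℕ∞} (hτ : IsStoppingTime ℱ τ)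
    {N : ℕ} (hbdd : ∀ ω, τ ω ≤ N) : μ[stoppedValue f τ] ≤ μ[f 0] := by
  have h := hf.neg.expected_stoppedValue_mono (isStoppingTime_const ℱ 0) hτ
    (fun _ => zero_le) hbdd
  change ∫ ω, -f 0 ω ∂μ ≤ ∫ ω, -stoppedValue f τ ω ∂μ at h
  rwa [integral_neg, integral_neg, neg_le_neg_iff] at h

theorem Supermartingale.maximal_ineq [IsFiniteMeasure μ] {f : ℕ → Ω → ℝ}
    (hf : Supermartingale f ℱ μ) (hnonneg : 0 ≤ f) (ε : ℝ) (n : ℕ) :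
    ε * μ.real {ω | ∃ k ≤ n, ε ≤ f k ω} ≤ μ[f 0] := by
  set A := {ω | ∃ k ≤ n, ε ≤ f k ω}
  set τ : Ω → ℕ∞ := fun ω => (hittingBtwn f {y | ε ≤ y} 0 n ω : ℕ)
  have hτ : IsStoppingTime ℱ τ :=
    hf.stronglyAdapted.adapted.isStoppingTime_hittingBtwn measurableSet_Ici
  have hτ_le : ∀ ω, τ ω ≤ n := fun ω => WithTop.coe_le_coe.mpr (hittingBtwn_le ω)
  have hA : MeasurableSet A := by
    have : A = ⋃ k ∈ Set.Iic n, {ω | ε ≤ f k ω} := by ext; simp [A]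
    rw [this]
    exact .biUnion (Set.to_countable _) fun k _ => measurableSet_le measurable_const
      ((hf.stronglyMeasurable k).measurable.mono (ℱ.le k) le_rfl)
  have hlow : A.indicator (fun _ => ε) ≤ stoppedValue f τ := by
    intro ω
    by_cases hω : ω ∈ A
    · rw [Set.indicator_of_mem hω]
      obtain ⟨k, hk, hfk⟩ := hω
      exact stoppedValue_hittingBtwn_mem ⟨k, ⟨zero_le, hk⟩, hfk⟩
    · rw [Set.indicator_of_notMem hω]
      exact hnonneg _ _
  calc ε * μ.real A = ∫ ω, A.indicator (fun _ => ε) ω ∂μ := by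
        rw [integral_indicator_const _ hA, smul_eq_mul, mul_comm]
    _ ≤ μ[stoppedValue f τ] :=
        integral_mono ((integrable_const ε).indicator hA)
          (integrable_stoppedValue ℕ hτ hf.integrable hτ_le) hlow
    _ ≤ μ[f 0] := hf.integral_stoppedValue_le_integral_zero hτ hτ_le

/-- The bound on `E[V T | ℱ k]` obtained by iterating `E[V (k+1) | ℱ k] ≤ q V k + ψ` from `k` to
`T`; it stays constant after time `T`. -/
noncomputable def driftMajorant (q ψ : ℝ) (T : ℕ) (V : ℕ → Ω → ℝ) (k : ℕ) (ω : Ω) : ℝ :=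
  q ^ (T - k) * V (min k T) ω + ψ * ∑ j ∈ range (T - k), q ^ j

variable {q ψ : ℝ} {T : ℕ} {V : ℕ → Ω → ℝ}

theorem driftMajorant_nonneg (hq : 0 ≤ q) (hψ : 0 ≤ ψ) (hV : 0 ≤ V) :
    0 ≤ driftMajorant q ψ T V :=
  fun _ _ => add_nonneg (mul_nonneg (pow_nonneg hq _) (hV _ _))
    (mul_nonneg hψ (sum_nonneg fun j _ => pow_nonneg hq j))

theorem le_driftMajorant {α : ℝ} (hq : 0 ≤ q) (hα : (1 - q) * α ≤ ψ) {k : ℕ} (hk : k ≤ T)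
    {ω : Ω} (hV : α ≤ V k ω) : α ≤ driftMajorant q ψ T V k ω := by
  rw [driftMajorant, min_eq_left hk]
  have := mul_le_mul_of_nonneg_left hV (pow_nonneg hq (T - k))
  linarith [le_pow_mul_add_mul_geom_sum hq hα (T - k)]

theorem driftMajorant_zero {v : ℝ} (hV : ∀ ω, V 0 ω = v) :
    driftMajorant q ψ T V 0 = fun _ => q ^ T * v + ψ * ∑ j ∈ range T, q ^ j := by
  ext ω
  simp [driftMajorant, hV]

theorem supermartingale_driftMajorant [IsFiniteMeasure μ] (hadp : Adapted ℱ V)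
    (hint : ∀ k, Integrable (V k) μ) (hq : 0 ≤ q)
    (hdrift : ∀ k, μ[V (k + 1)|ℱ k] ≤ᵐ[μ] fun ω => q * V k ω + ψ) :
    Supermartingale (driftMajorant q ψ T V) ℱ μ := by
  set M := driftMajorant q ψ T V
  have hMadp : Adapted ℱ M := fun k =>
    (((hadp (min k T)).mono (ℱ.mono (min_le_left k T)) le_rfl).const_mul _).add_const _
  have hMint : ∀ k, Integrable (M k) μ := fun k =>
    ((hint (min k T)).const_mul _).add (integrable_const _)
  refine supermartingale_nat hMadp.stronglyAdapted hMint fun i => ?_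
  rcases le_or_gt T i with hTi | hiT
  · have hM_succ : M (i + 1) = M i := by
      ext ω
      simp only [M, driftMajorant, Nat.sub_eq_zero_of_le hTi, min_eq_right hTi,
        Nat.sub_eq_zero_of_le (hTi.trans i.le_succ), min_eq_right (hTi.trans i.le_succ)]
    rw [hM_succ, condExp_of_stronglyMeasurable (ℱ.le i) (hMadp i).stronglyMeasurable (hMint i)]
  · obtain ⟨n, hn⟩ : ∃ n, T - i = n + 1 := ⟨T - (i + 1), by omega⟩
    set c := ψ * ∑ j ∈ range n, q ^ j
    have hM_succ : M (i + 1) = q ^ n • V (i + 1) + fun _ => c := by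
      ext ω
      simp only [M, driftMajorant, min_eq_left hiT.nat_succ_le, show T - (i + 1) = n by omega,
        Pi.add_apply, Pi.smul_apply, smul_eq_mul]
      rfl
    have hM : ∀ ω, M i ω = q ^ n * (q * V i ω + ψ) + c := by
      intro ω
      simp only [M, driftMajorant, min_eq_left hiT.le, hn, sum_range_succ, pow_succ]
      ring
    have hcondExp : μ[M (i + 1)|ℱ i] =ᵐ[μ] q ^ n • μ[V (i + 1)|ℱ i] + fun _ => c := by
      rw [hM_succ]
      filter_upwards [condExp_add ((hint (i + 1)).smul (q ^ n)) (integrable_const c) (ℱ i),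
        condExp_smul (q ^ n) (V (i + 1)) (ℱ i)] with ω h_add h_smul
      rw [h_add, Pi.add_apply, h_smul, condExp_const (ℱ.le i)]
      rfl
    filter_upwards [hcondExp, hdrift i] with ω hω hdω
    rw [hω, hM]
    simp only [Pi.add_apply, Pi.smul_apply, smul_eq_mul]
    gcongr

end MeasureTheory

theorem stmt_2_general {Ω : Type*} {mΩ : MeasurableSpace Ω} {μ : Measure Ω}
    [IsProbabilityMeasure μ] (ℱ : Filtration ℕ mΩ) (V : ℕ → Ω → ℝ)
    (hadp : Adapted ℱ V) (hint : ∀ k, Integrable (V k) μ)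
    (hnn : ∀ k ω, 0 ≤ V k ω)
    (κhat ψhat : ℝ) (hκ0 : 0 < κhat) (hκ1 : κhat < 1) (hψ : 0 ≤ ψhat)
    (hdrift : ∀ k, μ[V (k + 1)|ℱ k] ≤ᵐ[μ] fun ω => (1 - κhat) * V k ω + ψhat)
    (T : ℕ) (α v : ℝ) (hα : 0 < α)
    (hV0 : ∀ ω, V 0 ω = v) (hcase : α < ψhat / κhat) :
    (μ {ω | ∃ k ≤ T, α ≤ V k ω}).toReal
      ≤ (v / α) * (1 - κhat) ^ T + (ψhat / (κhat * α)) * (1 - (1 - κhat) ^ T) := by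
  set q := 1 - κhat
  have hq : 0 ≤ q := sub_nonneg.mpr hκ1.le
  have hψα : (1 - q) * α ≤ ψhat := by
    have := (lt_div_iff₀ hκ0).mp hcase
    simp only [q, sub_sub_cancel]
    linarith
  have hmax := (supermartingale_driftMajorant (T := T) hadp hint hq hdrift).maximal_ineq
    (driftMajorant_nonneg hq hψ hnn) α T
  rw [driftMajorant_zero hV0, integral_const, probReal_univ, one_smul] at hmax
  have hgeom : ∑ j ∈ range T, q ^ j = (1 - q ^ T) / κhat := by
    rw [geom_sum_eq (by linarith), show q - 1 = -κhat by ring, div_neg, ← neg_div, neg_sub]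
  calc (μ {ω | ∃ k ≤ T, α ≤ V k ω}).toReal
      ≤ μ.real {ω | ∃ k ≤ T, α ≤ driftMajorant q ψhat T V k ω} :=
        measureReal_mono fun ω ⟨k, hk, hVk⟩ => ⟨k, hk, le_driftMajorant hq hψα hk hVk⟩
    _ ≤ (q ^ T * v + ψhat * ∑ j ∈ range T, q ^ j) / α := by
        rw [le_div_iff₀ hα]
        linarith
    _ = (v / α) * q ^ T + (ψhat / (κhat * α)) * (1 - q ^ T) := by
        rw [hgeom]
        field_simp

/-- Finite-horizon probability bound for a nonnegative process with drift
`E[V(k+1) | F_k] ≤ (1 - κ̂) V(k) + ψ̂`, in the case `α < ψ̂/κ̂`: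
`P(sup_{0 ≤ k ≤ T} V(k) ≥ α | V 0 = v) ≤ (v/α)(1-κ̂)^T + (ψ̂/(κ̂ α))(1 - (1-κ̂)^T)`. -/
theorem stmt_2 {Ω : Type*} {mΩ : MeasurableSpace Ω} {μ : Measure Ω}
    [IsProbabilityMeasure μ] (ℱ : Filtration ℕ mΩ) (V : ℕ → Ω → ℝ)
    (hadp : Adapted ℱ V) (hint : ∀ k, Integrable (V k) μ)
    (hnn : ∀ k ω, 0 ≤ V k ω)
    (κhat ψhat : ℝ) (hκ0 : 0 < κhat) (hκ1 : κhat < 1) (hψ : 0 ≤ ψhat)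
    (hdrift : ∀ k, μ[V (k + 1)|ℱ k] ≤ᵐ[μ] fun ω => (1 - κhat) * V k ω + ψhat)
    (T : ℕ) (α v : ℝ) (hα : 0 < α) (hv0 : 0 ≤ v)
    (hV0 : ∀ ω, V 0 ω = v) (hcase : α < ψhat / κhat) :
    (μ {ω | ∃ k ≤ T, α ≤ V k ω}).toReal
      ≤ (v / α) * (1 - κhat) ^ T + (ψhat / (κhat * α)) * (1 - (1 - κhat) ^ T) :=
  stmt_2_general ℱ V hadp hint hnn κhat ψhat hκ0 hκ1 hψ hdrift T α v hα hV0 hcase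
end

section
/- Given N functions α_i ∈ K∞ (continuous, strictly increasing, α_i(0) = 0, unbounded) and positive weights μ_i > 0, the function ᾱ(r) := max{ Σ_{i=1}^N α_i⁻¹(s_i) : s_i ≥ 0, Σ_{i=1}^N μ_i s_i = r } is well-defined (the maximum is attained) and is itself a K∞ function. -/
open scoped NNReal

/-- A function `γ : ℝ≥0 → ℝ≥0` is of class `K∞` if it is continuous, strictly
increasing, vanishes at `0`, and is unbounded. -/
def IsKInf (γ : ℝ≥0 → ℝ≥0) : Prop :=
  Continuous γ ∧ StrictMono γ ∧ γ 0 = 0 ∧ Filter.Tendsto γ Filter.atTop Filter.atTop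

/-!
Rescaling `s ↦ r • s` maps `{s | ∑ μ i * s i = 1}` onto the constraint set at level `r`, so
`ᾱ` is the supremum of a jointly continuous function of `(r, s)` over one fixed compact set,
hence attained and continuous in `r`. Adding the extra mass `r' - r` to a single coordinate
strictly increases `∑ α_i⁻¹(s_i)`, which gives strict monotonicity, and putting all the mass on
coordinate `i` bounds `ᾱ r` below by `α_i⁻¹ (r / μ i)`, which is unbounded.
-/

open Set Filter Function

lemma isKInf_of_rightInverse {α β : ℝ≥0 → ℝ≥0} (hα : StrictMono α) (hβ : RightInverse β α) :
    IsKInf β := by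
  set e := hα.orderIsoOfSurjective α hβ.surjective
  have he : β = e.symm := funext fun x => e.injective <| by
    simp only [OrderIso.apply_symm_apply]; exact hβ x
  rw [he]
  exact ⟨e.symm.continuous, e.symm.strictMono, e.symm.map_bot, e.symm.tendsto_atTop⟩

lemma strictMono_sum_apply {ι α M : Type*} [Fintype ι] [PartialOrder α] [AddCommMonoid M]
    [PartialOrder M] [IsOrderedCancelAddMonoid M] {f : ι → α → M} (hf : ∀ i, StrictMono (f i)) :
    StrictMono fun s : ι → α => ∑ i, f i (s i) := by
  intro s t hst
  obtain ⟨hle, i, hi⟩ := Pi.lt_def.1 hst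
  exact Finset.sum_lt_sum (fun j _ => (hf j).monotone (hle j)) ⟨i, Finset.mem_univ i, hf i hi⟩

section WeightedLevel

variable {ι : Type*} [Fintype ι] {μ : ι → ℝ≥0}

def weightedLevel (μ : ι → ℝ≥0) (r : ℝ≥0) : Set (ι → ℝ≥0) := {s | ∑ i, μ i * s i = r}

lemma mem_weightedLevel {s : ι → ℝ≥0} {r : ℝ≥0} :
    s ∈ weightedLevel μ r ↔ ∑ i, μ i * s i = r := Iff.rfl

lemma weightedLevel_zero (hμ : ∀ i, 0 < μ i) : weightedLevel μ 0 = {0} := by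
  ext s
  simp [mem_weightedLevel, Finset.sum_eq_zero_iff, (hμ _).ne', funext_iff]

lemma isCompact_weightedLevel (hμ : ∀ i, 0 < μ i) (r : ℝ≥0) :
    IsCompact (weightedLevel μ r) := by
  refine (isCompact_univ_pi fun i => isCompact_Icc (a := 0) (b := r / μ i)).of_isClosed_subset
    (isClosed_eq (by fun_prop) continuous_const) fun s hs i _ => ⟨zero_le, ?_⟩
  rw [le_div_iff₀ (hμ i), mul_comm, ← mem_weightedLevel.1 hs]
  exact Finset.single_le_sum (f := fun j => μ j * s j) (fun j _ => zero_le) (Finset.mem_univ i)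

lemma add_single_mem_weightedLevel [DecidableEq ι] {s : ι → ℝ≥0} {a : ℝ≥0}
    (hs : s ∈ weightedLevel μ a) {i : ι} (hi : 0 < μ i) (c : ℝ≥0) :
    s + Pi.single i (c / μ i) ∈ weightedLevel μ (a + c) := by
  simp [mem_weightedLevel, mul_add, Finset.sum_add_distrib, mem_weightedLevel.1 hs,
    Pi.single_apply, mul_div_cancel₀ _ hi.ne']

lemma single_mem_weightedLevel [DecidableEq ι] {i : ι} (hi : 0 < μ i) (c : ℝ≥0) :
    Pi.single i (c / μ i) ∈ weightedLevel μ c := by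
  simpa using add_single_mem_weightedLevel (s := 0) (a := 0) (by simp [mem_weightedLevel]) hi c

lemma weightedLevel_nonempty (hμ : ∀ i, 0 < μ i) [Nonempty ι] (r : ℝ≥0) :
    (weightedLevel μ r).Nonempty := by
  classical
  exact ⟨_, single_mem_weightedLevel (hμ (Classical.arbitrary ι)) r⟩

lemma weightedLevel_eq_image_smul (hμ : ∀ i, 0 < μ i) [Nonempty ι] (r : ℝ≥0) :
    weightedLevel μ r = (r • ·) '' weightedLevel μ 1 := by
  rcases eq_or_ne r 0 with rfl | hr
  · simp only [zero_smul, weightedLevel_zero hμ]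
    exact ((weightedLevel_nonempty hμ 1).image_const 0).symm
  ext s
  constructor
  · intro hs
    refine ⟨r⁻¹ • s, ?_, smul_inv_smul₀ hr s⟩
    simp [mem_weightedLevel, mul_left_comm _ r⁻¹, ← Finset.mul_sum, mem_weightedLevel.1 hs, hr]
  · rintro ⟨t, ht, rfl⟩
    simp [mem_weightedLevel, mul_left_comm _ r, ← Finset.mul_sum, mem_weightedLevel.1 ht]

noncomputable def levelMax (μ : ι → ℝ≥0) (F : (ι → ℝ≥0) → ℝ≥0) (r : ℝ≥0) : ℝ≥0 :=
  sSup (F '' weightedLevel μ r)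

variable {F : (ι → ℝ≥0) → ℝ≥0}

lemma isGreatest_levelMax (hμ : ∀ i, 0 < μ i) [Nonempty ι] (hF : Continuous F) (r : ℝ≥0) :
    IsGreatest (F '' weightedLevel μ r) (levelMax μ F r) :=
  ((isCompact_weightedLevel hμ r).image hF).isGreatest_sSup ((weightedLevel_nonempty hμ r).image F)

lemma levelMax_zero (hμ : ∀ i, 0 < μ i) : levelMax μ F 0 = F 0 := by
  simp [levelMax, weightedLevel_zero hμ]

lemma continuous_levelMax (hμ : ∀ i, 0 < μ i) [Nonempty ι] (hF : Continuous F) :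
    Continuous (levelMax μ F) := by
  have h : levelMax μ F = fun r => sSup ((fun s => F (r • s)) '' weightedLevel μ 1) := by
    funext r
    rw [levelMax, weightedLevel_eq_image_smul hμ r, image_image]
  rw [h]
  exact (isCompact_weightedLevel hμ 1).continuous_sSup (hF.comp continuous_smul)

lemma strictMono_levelMax (hμ : ∀ i, 0 < μ i) [Nonempty ι] (hF : Continuous F)
    (hF' : StrictMono F) : StrictMono (levelMax μ F) := by
  classical
  intro a b hab
  obtain ⟨s, hs, hsa⟩ := (isGreatest_levelMax hμ hF a).1
  let i := Classical.arbitrary ι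
  have hmem := add_single_mem_weightedLevel hs (hμ i) (b - a)
  rw [add_tsub_cancel_of_le hab.le] at hmem
  calc levelMax μ F a = F s := hsa.symm
    _ < F (s + Pi.single i ((b - a) / μ i)) :=
      hF' <| lt_add_of_pos_right s <| Pi.single_pos.2 <| div_pos (tsub_pos_of_lt hab) (hμ i)
    _ ≤ levelMax μ F b := (isGreatest_levelMax hμ hF b).2 ⟨_, hmem, rfl⟩

lemma tendsto_levelMax_atTop [DecidableEq ι] (hμ : ∀ i, 0 < μ i) (hF : Continuous F) (i : ι)
    (hFi : Tendsto (fun x => F (Pi.single i x)) atTop atTop) :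
    Tendsto (levelMax μ F) atTop atTop :=
  have : Nonempty ι := ⟨i⟩
  tendsto_atTop_mono
    (fun r => (isGreatest_levelMax hμ hF r).2 ⟨_, single_mem_weightedLevel (hμ i) r, rfl⟩)
    (hFi.comp (tendsto_id.atTop_div_const (hμ i)))

end WeightedLevel

/-- Given `K∞` functions `α i` with inverses `β i = (α i)⁻¹` and positive weights `μ i`,
the function `ᾱ(r) = max { Σ β i (s i) : s i ≥ 0, Σ μ i * s i = r }` is well defined
(the maximum is attained) and is itself a `K∞` function. -/
theorem stmt_3 {N : ℕ} (hN : 1 ≤ N) (α β : Fin N → ℝ≥0 → ℝ≥0)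
    (hα : ∀ i, IsKInf (α i))
    (hβ : ∀ i, Function.LeftInverse (β i) (α i) ∧ Function.RightInverse (β i) (α i))
    (μ : Fin N → ℝ≥0) (hμ : ∀ i, 0 < μ i) :
    ∃ barα : ℝ≥0 → ℝ≥0,
      (∀ r, IsGreatest
        {t | ∃ s : Fin N → ℝ≥0, (∑ i, μ i * s i = r) ∧ (∑ i, β i (s i) = t)}
        (barα r)) ∧ IsKInf barα := by
  let i₀ : Fin N := ⟨0, hN⟩
  have : Nonempty (Fin N) := ⟨i₀⟩
  have hβK : ∀ i, IsKInf (β i) := fun i => isKInf_of_rightInverse (hα i).2.1 (hβ i).2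
  let F : (Fin N → ℝ≥0) → ℝ≥0 := fun s => ∑ i, β i (s i)
  have hF : Continuous F := continuous_finsetSum _ fun i _ => (hβK i).1.comp (continuous_apply i)
  have hF_single : ∀ x, F (Pi.single i₀ x) = β i₀ x := fun x =>
    Fintype.sum_eq_single i₀ fun j hj => by simp [hj, (hβK j).2.2.1]
  refine ⟨levelMax μ F, isGreatest_levelMax hμ hF, continuous_levelMax hμ hF,
    strictMono_levelMax hμ hF (strictMono_sum_apply fun i => (hβK i).2.1), ?_,
    tendsto_levelMax_atTop hμ hF i₀ ?_⟩
  · simp [levelMax_zero hμ, F, (hβK _).2.2.1]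
  · simpa only [hF_single] using (hβK i₀).2.2.2
end

section
/- Given N functions κ_i of class K (continuous, strictly increasing, κ_i(0) = 0) and positive weights μ_i > 0, the function κ(r) := min{ Σ_{i=1}^N μ_i κ_i(s_i) : s_i ≥ 0, Σ_{i=1}^N μ_i s_i = r } is well-defined, satisfies κ(0) = 0, κ(r) > 0 for r > 0, and is nondecreasing. -/
open scoped NNReal

/-
The constraint set `{s ≥ 0 : Σ μ_i s_i = r}` is a compact simplex because every weight is
positive, so the continuous cost `Σ μ_i κ_i(s_i)` attains its minimum on it. A feasible point
for `r > 0` has some `s_i > 0`, hence positive cost. For `r ≤ r'`, shrinking a minimiser for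
`r'` by the factor `r / r'` gives a feasible point for `r` which, the `κ_i` being monotone,
costs no more.
-/

def IsK (γ : ℝ≥0 → ℝ≥0) : Prop :=
  Continuous γ ∧ StrictMono γ ∧ γ 0 = 0

theorem IsK.pos {γ : ℝ≥0 → ℝ≥0} (hγ : IsK γ) {x : ℝ≥0} (hx : 0 < x) : 0 < γ x := by
  simpa [hγ.2.2] using hγ.2.1 hx

section WeightedSum

variable {ι : Type*} [Fintype ι] (μ : ι → ℝ≥0)

def weightedSum (s : ι → ℝ≥0) : ℝ≥0 := ∑ i, μ i * s i

noncomputable def minWeightedCost (κ : ι → ℝ≥0 → ℝ≥0) (r : ℝ≥0) : ℝ≥0 :=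
  sInf ((fun s => weightedSum μ fun i => κ i (s i)) '' (weightedSum μ ⁻¹' {r}))

variable {μ}

theorem continuous_weightedSum : Continuous (weightedSum μ) :=
  continuous_finsetSum _ fun i _ => continuous_const.mul (continuous_apply i)

theorem mul_le_weightedSum (s : ι → ℝ≥0) (i : ι) : μ i * s i ≤ weightedSum μ s :=
  Finset.single_le_sum (f := fun j => μ j * s j) (fun _ _ => zero_le) (Finset.mem_univ i)

theorem weightedSum_mono {s t : ι → ℝ≥0} (h : s ≤ t) : weightedSum μ s ≤ weightedSum μ t :=
  Finset.sum_le_sum fun i _ => mul_le_mul_right (h i) _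

theorem weightedSum_smul (c : ℝ≥0) (s : ι → ℝ≥0) :
    weightedSum μ (c • s) = c * weightedSum μ s := by
  simp only [weightedSum, Finset.mul_sum, Pi.smul_apply, smul_eq_mul, mul_left_comm]

theorem weightedSum_pi_single [DecidableEq ι] {i : ι} (hi : μ i ≠ 0) (r : ℝ≥0) :
    weightedSum μ (Pi.single i (r / μ i)) = r := by
  rw [weightedSum, Finset.sum_eq_single i (fun j _ hj => by simp [hj]) (by simp)]
  simp [mul_div_cancel₀ _ hi]

theorem weightedSum_pos_of_pos {s t : ι → ℝ≥0} (hst : ∀ i, 0 < s i → 0 < t i)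
    (hμ : ∀ i, μ i ≠ 0) (hs : 0 < weightedSum μ s) : 0 < weightedSum μ t := by
  obtain ⟨i, -, hi⟩ := Finset.sum_pos_iff.mp hs
  have hsi : 0 < s i := pos_of_mul_pos_right hi zero_le
  exact (mul_pos (pos_iff_ne_zero.mpr (hμ i)) (hst i hsi)).trans_le (mul_le_weightedSum t i)

theorem isCompact_weightedSum_preimage (hμ : ∀ i, μ i ≠ 0) (r : ℝ≥0) :
    IsCompact (weightedSum μ ⁻¹' {r}) := by
  refine (isCompact_univ_pi fun i => isCompact_Icc (a := 0) (b := r / μ i)).of_isClosed_subset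
    (isClosed_singleton.preimage continuous_weightedSum) fun s hs i _ => ⟨zero_le, ?_⟩
  rw [le_div_iff₀ (pos_iff_ne_zero.mpr (hμ i)), mul_comm]
  exact (mul_le_weightedSum s i).trans_eq hs

theorem weightedSum_preimage_nonempty [Nonempty ι] (hμ : ∀ i, μ i ≠ 0) (r : ℝ≥0) :
    (weightedSum μ ⁻¹' {r}).Nonempty := by
  classical
  let i := Classical.arbitrary ι
  exact ⟨_, weightedSum_pi_single (hμ i) r⟩

variable {κ : ι → ℝ≥0 → ℝ≥0}

theorem isLeast_minWeightedCost [Nonempty ι] (hμ : ∀ i, μ i ≠ 0) (hκ : ∀ i, Continuous (κ i))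
    (r : ℝ≥0) :
    IsLeast ((fun s => weightedSum μ fun i => κ i (s i)) '' (weightedSum μ ⁻¹' {r}))
      (minWeightedCost μ κ r) := by
  have hcost : Continuous fun s : ι → ℝ≥0 => weightedSum μ fun i => κ i (s i) :=
    continuous_weightedSum.comp (continuous_pi fun i => (hκ i).comp (continuous_apply i))
  have hcompact := (isCompact_weightedSum_preimage hμ r).image hcost
  exact ⟨hcompact.sInf_mem ((weightedSum_preimage_nonempty hμ r).image _),
    fun _ ht => csInf_le (OrderBot.bddBelow _) ht⟩

theorem minWeightedCost_zero (hκ : ∀ i, κ i 0 = 0) : minWeightedCost μ κ 0 = 0 :=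
  le_antisymm
    (csInf_le (OrderBot.bddBelow _) ⟨0, by simp [weightedSum], by simp [weightedSum, hκ]⟩)
    zero_le

theorem minWeightedCost_pos [Nonempty ι] (hμ : ∀ i, μ i ≠ 0) (hκ : ∀ i, Continuous (κ i))
    (hκpos : ∀ i x, 0 < x → 0 < κ i x) {r : ℝ≥0} (hr : 0 < r) : 0 < minWeightedCost μ κ r := by
  obtain ⟨s, hs, hcost⟩ := (isLeast_minWeightedCost hμ hκ r).1
  rw [← hcost]
  exact weightedSum_pos_of_pos (fun i => hκpos i (s i)) hμ (hs.symm ▸ hr)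

theorem minWeightedCost_mono [Nonempty ι] (hμ : ∀ i, μ i ≠ 0) (hκ : ∀ i, Monotone (κ i)) :
    Monotone (minWeightedCost μ κ) := by
  intro r r' hrr'
  rcases eq_or_ne r' 0 with rfl | hr'
  · rw [nonpos_iff_eq_zero.mp hrr']
  refine le_csInf ((weightedSum_preimage_nonempty hμ r').image _) ?_
  rintro _ ⟨s, hs : weightedSum μ s = r', rfl⟩
  have hc : r / r' ≤ 1 := div_le_one_of_le₀ hrr' zero_le
  have hfeasible : weightedSum μ ((r / r') • s) = r := by
    rw [weightedSum_smul, hs, div_mul_cancel₀ _ hr']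
  calc minWeightedCost μ κ r ≤ weightedSum μ fun i => κ i (((r / r') • s) i) :=
        csInf_le (OrderBot.bddBelow _) ⟨(r / r') • s, hfeasible, rfl⟩
    _ ≤ weightedSum μ fun i => κ i (s i) :=
        weightedSum_mono fun i => hκ i (mul_le_of_le_one_left zero_le hc)

end WeightedSum

/-- Given class-`K` functions `κ i` and positive weights `μ i`, the function
`κ(r) = min { Σ μ i * κ i (s i) : s i ≥ 0, Σ μ i * s i = r }` is well defined
(the minimum is attained), satisfies `κ 0 = 0`, `κ r > 0` for `r > 0`, and is
nondecreasing. -/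
theorem stmt_4 {N : ℕ} (hN : 1 ≤ N) (κi : Fin N → ℝ≥0 → ℝ≥0)
    (hκi : ∀ i, IsK (κi i)) (μ : Fin N → ℝ≥0) (hμ : ∀ i, 0 < μ i) :
    ∃ κ : ℝ≥0 → ℝ≥0,
      (∀ r, IsLeast
        {t | ∃ s : Fin N → ℝ≥0, (∑ i, μ i * s i = r) ∧ (∑ i, μ i * κi i (s i) = t)}
        (κ r)) ∧ κ 0 = 0 ∧ (∀ r, 0 < r → 0 < κ r) ∧ Monotone κ := by
  have : Nonempty (Fin N) := ⟨⟨0, hN⟩⟩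
  have hμ' : ∀ i, μ i ≠ 0 := fun i => (hμ i).ne'
  exact ⟨minWeightedCost μ κi,
    isLeast_minWeightedCost hμ' (fun i => (hκi i).1),
    minWeightedCost_zero fun i => (hκi i).2.2,
    fun _ => minWeightedCost_pos hμ' (fun i => (hκi i).1) fun i _ => (hκi i).pos,
    minWeightedCost_mono hμ' fun i => (hκi i).2.1.monotone⟩
end

section
/- If α_i ∈ K∞ and V_i(x_i, x̂_i) ≥ α_i(‖h_i(x_i) − ĥ_i(x̂_i)‖) for each i = 1,...,N, and ‖h(x) − ĥ(x̂)‖ ≤ Σ_i ‖h_i(x_i) − ĥ_i(x̂_i)‖ (triangle inequality for stacked vectors), then for weights μ_i > 0 the function V(x,x̂) := Σ_i μ_i V_i(x_i, x̂_i) satisfies α(‖h(x) − ĥ(x̂)‖) ≤ V(x,x̂) where α := ᾱ⁻¹ with ᾱ(r) := max{Σ_i α_i⁻¹(s_i) : s_i ≥ 0, Σ_i μ_i s_i = r}. -/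
open scoped NNReal

/-- If `α i ∈ K∞`, `V i (x i, xh i) ≥ α i ‖h i (x i) − ĥ i (xh i)‖`, and the stacked
outputs satisfy the triangle inequality
`‖H x − Ĥ xh‖ ≤ Σ i ‖h i (x i) − ĥ i (xh i)‖`, then for weights `μ i > 0` the sum
`V(x,xh) = Σ i μ i * V i (x i, xh i)` satisfies `αfun ‖H x − Ĥ xh‖ ≤ V(x,xh)` where
`αfun = ᾱ⁻¹` and `ᾱ(r) = max {Σ β i (s i) : s i ≥ 0, Σ μ i * s i = r}` with
`β i = (α i)⁻¹`. -/
theorem stmt_5 {N : ℕ} (hN : 1 ≤ N)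
    (X Xh : Fin N → Type*) (Y : Fin N → Type*) [∀ i, NormedAddCommGroup (Y i)]
    (Z : Type*) [NormedAddCommGroup Z]
    (h : ∀ i, X i → Y i) (hh : ∀ i, Xh i → Y i)
    (H : (∀ i, X i) → Z) (Hh : (∀ i, Xh i) → Z)
    (V : ∀ i, X i → Xh i → ℝ≥0)
    (α β : Fin N → ℝ≥0 → ℝ≥0) (hα : ∀ i, IsKInf (α i))
    (hβ : ∀ i, Function.LeftInverse (β i) (α i) ∧ Function.RightInverse (β i) (α i))
    (μ : Fin N → ℝ≥0) (hμ : ∀ i, 0 < μ i)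
    (hV : ∀ i (x : X i) (xh : Xh i), α i ‖h i x - hh i xh‖₊ ≤ V i x xh)
    (htri : ∀ (x : ∀ i, X i) (xh : ∀ i, Xh i),
      ‖H x - Hh xh‖₊ ≤ ∑ i, ‖h i (x i) - hh i (xh i)‖₊)
    (barα αfun : ℝ≥0 → ℝ≥0)
    (hbar : ∀ r, IsGreatest
      {t | ∃ s : Fin N → ℝ≥0, (∑ i, μ i * s i = r) ∧ (∑ i, β i (s i) = t)} (barα r))
    (hαfun : Function.LeftInverse αfun barα ∧ Function.RightInverse αfun barα) :
    ∀ (x : ∀ i, X i) (xh : ∀ i, Xh i),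
      αfun ‖H x - Hh xh‖₊ ≤ ∑ i, μ i * V i (x i) (xh i) := by
  intro x xh
  -- β i is monotone (indeed strictly monotone)
  have hβmono : ∀ i, Monotone (β i) := by
    intro i a b hab
    by_contra hle
    push_neg at hle
    have h2 := (hα i).2.1 hle
    rw [(hβ i).2, (hβ i).2] at h2
    exact absurd hab (not_le.2 h2)
  have hβstrict : ∀ i, StrictMono (β i) := by
    intro i a b hab
    rcases lt_or_eq_of_le (hβmono i hab.le) with h' | h'
    · exact h'
    · exfalso
      have : α i (β i a) = α i (β i b) := by rw [h']
      rw [(hβ i).2, (hβ i).2] at this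
      exact absurd this hab.ne
  set i0 : Fin N := ⟨0, hN⟩ with hi0
  -- barα is strictly monotone
  have hbarmono : StrictMono barα := by
    intro r r' hrr
    obtain ⟨s, hs1, hs2⟩ := (hbar r).1
    set s' : Fin N → ℝ≥0 := Function.update s i0 (s i0 + (r' - r) / μ i0) with hs'
    have hmem : (∑ i, β i (s' i)) ∈
        {t | ∃ s : Fin N → ℝ≥0, (∑ i, μ i * s i = r') ∧ (∑ i, β i (s i) = t)} := by
      refine ⟨s', ?_, rfl⟩
      have key : ∀ i, μ i * s' i = μ i * s i + (if i = i0 then r' - r else 0) := by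
        intro i
        by_cases hi : i = i0
        · subst hi
          simp only [hs', Function.update_self, if_pos rfl, mul_add]
          rw [if_true]
          congr 1
          rw [mul_comm, div_mul_cancel₀ _ (hμ i0).ne']
        · simp [hs', Function.update_of_ne hi, hi]
      rw [Finset.sum_congr rfl (fun i _ => key i), Finset.sum_add_distrib, hs1,
        Finset.sum_ite_eq' Finset.univ i0, if_pos (Finset.mem_univ _),
        add_tsub_cancel_of_le hrr.le]
    have hle := (hbar r').2 hmem
    have hlt : (∑ i, β i (s i)) < ∑ i, β i (s' i) := by
      apply Finset.sum_lt_sum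
      · intro i _
        by_cases hi : i = i0
        · subst hi
          exact hβmono _ (by simp [hs'])
        · simp [hs', Function.update_of_ne hi]
      · refine ⟨i0, Finset.mem_univ _, ?_⟩
        apply hβstrict
        simp only [hs', Function.update_self]
        have : 0 < (r' - r) / μ i0 :=
          div_pos (tsub_pos_of_lt hrr) (hμ i0)
        exact lt_add_of_pos_right _ this
    calc barα r = ∑ i, β i (s i) := hs2.symm
      _ < ∑ i, β i (s' i) := hlt
      _ ≤ barα r' := hle
  -- αfun is monotone
  have hαfunmono : Monotone αfun := by
    intro a b hab
    by_contra hle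
    push_neg at hle
    have h2 := hbarmono hle
    rw [hαfun.2, hαfun.2] at h2
    exact absurd hab (not_le.2 h2)
  set r : ℝ≥0 := ∑ i, μ i * V i (x i) (xh i) with hr
  -- ‖H x - Hh xh‖ ≤ barα r
  have hw : ‖H x - Hh xh‖₊ ≤ barα r := by
    have h1 : ‖H x - Hh xh‖₊ ≤ ∑ i, β i (V i (x i) (xh i)) := by
      refine (htri x xh).trans (Finset.sum_le_sum fun i _ => ?_)
      have := hβmono i (hV i (x i) (xh i))
      rwa [(hβ i).1] at this
    refine h1.trans ((hbar r).2 ⟨fun i => V i (x i) (xh i), rfl, rfl⟩)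
  calc αfun ‖H x - Hh xh‖₊ ≤ αfun (barα r) := hαfunmono hw
    _ = r := hαfun.1 r
end

section
/- If for all x ∈ X, x̂ ∈ X̂, and ŵ, w the interface inequality E[V(f(x,ν,w,ς), f̂(x̂,ν̂,ŵ,ς)) | ·] − V(x,x̂) ≤ −κ(V(x,x̂)) + ρ(‖ν̂‖) + ψ + [Gw − Ĝŵ; h₂(x) − Hĥ₂(x̂)]ᵀ X̄ [Gw − Ĝŵ; h₂(x) − Hĥ₂(x̂)] holds for each subsystem i with data (V_i, κ_i, ρ_i, ψ_i, G_i, Ĝ_i, H_i, X̄_i), and internal inputs are set by interconnection matrices w = M h₂(x), ŵ = M̂ ĥ₂(x̂), then under the conditions [GM; I]ᵀ X̄_cmp [GM; I] ⪯ 0 and GMH = ĜM̂, the stacked quadratic supply term Σ_i μ_i [G_i w_i − Ĝ_i ŵ_i; h_{2i}(x_i) − H_i ĥ_{2i}(x̂_i)]ᵀ X̄_i [...] equals zᵀ ([GM; I]ᵀ X̄_cmp [GM; I]) z ≤ 0 where z = [h_{21}(x_1) − H_1ĥ_{21}(x̂_1); ...; h_{2N}(x_N) − H_Nĥ_{2N}(x̂_N)],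 for μ_i > 0, G = diag(G_i), Ĝ = diag(Ĝ_i), H = diag(H_i), X̄_cmp the block-diagonal-by-partition weighted matrix of Theorem 4.2. -/
open Matrix

/-!
With `z = h₂(x) - H ĥ₂(x̂)` and `B = [GM; I]`, the form `zᵀ(Bᵀ X̄_cmp B)z` is the form of `X̄_cmp`
at `Bz = [GMz; z]`. Every block of `X̄_cmp` is block diagonal, so this splits into the
`μ_i`-weighted sum of the forms of `X̄_i` at `[(GMz)_i; z_i]`, and `GMH = ĜM̂` gives
`GMz = GMh₂(x) - ĜM̂ĥ₂(x̂) = Gw - Ĝŵ`. Nonpositivity is then `Bᵀ X̄_cmp B ⪯ 0`.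
-/

section BlockDiagonal

variable {ι R : Type*} [Fintype ι] {m n : ι → Type*} [NonUnitalNonAssocSemiring R]

theorem Matrix.blockDiagonal'_mulVec_apply [DecidableEq ι] [∀ i, Fintype (n i)]
    (A : ∀ i, Matrix (m i) (n i) R) (v : (Σ i, n i) → R) (i : ι) (b : m i) :
    (blockDiagonal' A *ᵥ v) ⟨i, b⟩ = (A i *ᵥ fun c => v ⟨i, c⟩) b := by
  simp only [mulVec, dotProduct, Fintype.sum_sigma]
  rw [Finset.sum_eq_single i]
  · simp only [blockDiagonal'_apply_eq]
  · intro j _ hji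
    exact Finset.sum_eq_zero fun c _ => by
      rw [blockDiagonal'_apply_ne _ _ _ hji.symm, zero_mul]
  · simp

theorem Matrix.dotProduct_sigma [∀ i, Fintype (m i)] (v w : (Σ i, m i) → R) :
    v ⬝ᵥ w = ∑ i, (fun b => v ⟨i, b⟩) ⬝ᵥ (fun b => w ⟨i, b⟩) :=
  Fintype.sum_sigma _

theorem Matrix.dotProduct_blockDiagonal'_mulVec [DecidableEq ι] [∀ i, Fintype (m i)]
    [∀ i, Fintype (n i)]
    (A : ∀ i, Matrix (m i) (n i) R) (v : (Σ i, m i) → R) (w : (Σ i, n i) → R) :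
    v ⬝ᵥ (blockDiagonal' A *ᵥ w) = ∑ i, (fun b => v ⟨i, b⟩) ⬝ᵥ (A i *ᵥ fun c => w ⟨i, c⟩) := by
  rw [dotProduct_sigma]
  simp only [blockDiagonal'_mulVec_apply]

theorem Matrix.sumElim_dotProduct_fromBlocks_blockDiagonal'_mulVec [DecidableEq ι]
    [∀ i, Fintype (m i)] [∀ i, Fintype (n i)]
    (A : ∀ i, Matrix (m i) (m i) R) (B : ∀ i, Matrix (m i) (n i) R)
    (C : ∀ i, Matrix (n i) (m i) R) (D : ∀ i, Matrix (n i) (n i) R)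
    (u u' : (Σ i, m i) → R) (z z' : (Σ i, n i) → R) :
    Sum.elim u z ⬝ᵥ (fromBlocks (blockDiagonal' A) (blockDiagonal' B) (blockDiagonal' C)
        (blockDiagonal' D) *ᵥ Sum.elim u' z')
      = ∑ i, Sum.elim (fun b => u ⟨i, b⟩) (fun b => z ⟨i, b⟩) ⬝ᵥ
          (fromBlocks (A i) (B i) (C i) (D i) *ᵥ
            Sum.elim (fun b => u' ⟨i, b⟩) (fun b => z' ⟨i, b⟩)) := by
  simp only [fromBlocks_mulVec, sumElim_dotProduct_sumElim, Sum.elim_comp_inl,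
    Sum.elim_comp_inr, dotProduct_add, dotProduct_blockDiagonal'_mulVec,
    ← Finset.sum_add_distrib]

end BlockDiagonal

theorem Matrix.dotProduct_transpose_mul_mul_mulVec {m n R : Type*} [Fintype m] [Fintype n]
    [CommSemiring R] (B : Matrix m n R) (X : Matrix m m R) (z : n → R) :
    z ⬝ᵥ ((Bᵀ * X * B) *ᵥ z) = (B *ᵥ z) ⬝ᵥ (X *ᵥ (B *ᵥ z)) := by
  rw [Matrix.mul_assoc, ← mulVec_mulVec, ← mulVec_mulVec, dotProduct_mulVec, vecMul_transpose]

theorem stmt_16_general {N : ℕ} (mi pii phii qi : Fin N → ℕ)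
    (G : ∀ i, Matrix (Fin (mi i)) (Fin (pii i)) ℝ)
    (Gh : ∀ i, Matrix (Fin (mi i)) (Fin (phii i)) ℝ)
    (Hm : ∀ i, Matrix (Fin (qi i)) (Fin (qi i)) ℝ)
    (X11 : ∀ i, Matrix (Fin (mi i)) (Fin (mi i)) ℝ)
    (X12 : ∀ i, Matrix (Fin (mi i)) (Fin (qi i)) ℝ)
    (X21 : ∀ i, Matrix (Fin (qi i)) (Fin (mi i)) ℝ)
    (X22 : ∀ i, Matrix (Fin (qi i)) (Fin (qi i)) ℝ)
    (μ : Fin N → ℝ)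
    (M : Matrix ((i : Fin N) × Fin (pii i)) ((i : Fin N) × Fin (qi i)) ℝ)
    (Mh : Matrix ((i : Fin N) × Fin (phii i)) ((i : Fin N) × Fin (qi i)) ℝ)
    -- the composite supply-rate matrix `X̄_cmp` and the stacked matrix `[GM; I]`
    (Xcmp : Matrix (((i : Fin N) × Fin (mi i)) ⊕ ((i : Fin N) × Fin (qi i)))
      (((i : Fin N) × Fin (mi i)) ⊕ ((i : Fin N) × Fin (qi i))) ℝ)
    (hXcmp : Xcmp = Matrix.fromBlocks
      (Matrix.blockDiagonal' fun i => μ i • X11 i)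
      (Matrix.blockDiagonal' fun i => μ i • X12 i)
      (Matrix.blockDiagonal' fun i => μ i • X21 i)
      (Matrix.blockDiagonal' fun i => μ i • X22 i))
    (B : Matrix (((i : Fin N) × Fin (mi i)) ⊕ ((i : Fin N) × Fin (qi i)))
      ((i : Fin N) × Fin (qi i)) ℝ)
    (hB : B = Matrix.fromRows (Matrix.blockDiagonal' G * M) 1)
    -- compositionality conditions (4.2) and (4.3)
    (hPSD : (-(Bᵀ * Xcmp * B)).PosSemidef)
    (hGMH : Matrix.blockDiagonal' G * M * Matrix.blockDiagonal' Hm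
      = Matrix.blockDiagonal' Gh * Mh) :
    -- for stacked concrete outputs `a = h₂(x)` and abstract outputs `ah = ĥ₂(x̂)`
    ∀ a ah : ((i : Fin N) × Fin (qi i)) → ℝ,
      (∑ i, μ i *
        ((Sum.elim
            (G i *ᵥ (fun b => (M *ᵥ a) ⟨i, b⟩) - Gh i *ᵥ (fun b => (Mh *ᵥ ah) ⟨i, b⟩))
            (fun b => (a - Matrix.blockDiagonal' Hm *ᵥ ah) ⟨i, b⟩)) ⬝ᵥ
          (Matrix.fromBlocks (X11 i) (X12 i) (X21 i) (X22 i) *ᵥ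
            Sum.elim
              (G i *ᵥ (fun b => (M *ᵥ a) ⟨i, b⟩) - Gh i *ᵥ (fun b => (Mh *ᵥ ah) ⟨i, b⟩))
              (fun b => (a - Matrix.blockDiagonal' Hm *ᵥ ah) ⟨i, b⟩))))
      = (a - Matrix.blockDiagonal' Hm *ᵥ ah) ⬝ᵥ
          ((Bᵀ * Xcmp * B) *ᵥ (a - Matrix.blockDiagonal' Hm *ᵥ ah)) ∧
      (∑ i, μ i *
        ((Sum.elim
            (G i *ᵥ (fun b => (M *ᵥ a) ⟨i, b⟩) - Gh i *ᵥ (fun b => (Mh *ᵥ ah) ⟨i, b⟩))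
            (fun b => (a - Matrix.blockDiagonal' Hm *ᵥ ah) ⟨i, b⟩)) ⬝ᵥ
          (Matrix.fromBlocks (X11 i) (X12 i) (X21 i) (X22 i) *ᵥ
            Sum.elim
              (G i *ᵥ (fun b => (M *ᵥ a) ⟨i, b⟩) - Gh i *ᵥ (fun b => (Mh *ᵥ ah) ⟨i, b⟩))
              (fun b => (a - Matrix.blockDiagonal' Hm *ᵥ ah) ⟨i, b⟩)))) ≤ 0 := by
  intro a ah
  set z := a - blockDiagonal' Hm *ᵥ ah
  set e := blockDiagonal' G *ᵥ (M *ᵥ a) - blockDiagonal' Gh *ᵥ (Mh *ᵥ ah)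
  have hBz : B *ᵥ z = Sum.elim e z := by
    rw [hB, fromRows_mulVec, one_mulVec, mulVec_sub, mulVec_mulVec, hGMH]
    simp only [e, mulVec_mulVec]
  have he : ∀ i, G i *ᵥ (fun b => (M *ᵥ a) ⟨i, b⟩) - Gh i *ᵥ (fun b => (Mh *ᵥ ah) ⟨i, b⟩)
      = fun b => e ⟨i, b⟩ := fun i => by
    funext b
    simp only [e, Pi.sub_apply, blockDiagonal'_mulVec_apply]
  have hquad : z ⬝ᵥ ((Bᵀ * Xcmp * B) *ᵥ z) ≤ 0 := by
    simpa only [star_trivial, neg_mulVec, dotProduct_neg, neg_nonneg]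
      using hPSD.dotProduct_mulVec_nonneg z
  refine (fun h => ⟨h, h.trans_le hquad⟩) ?_
  rw [dotProduct_transpose_mul_mul_mulVec, hBz, hXcmp,
    sumElim_dotProduct_fromBlocks_blockDiagonal'_mulVec]
  refine Finset.sum_congr rfl fun i _ => ?_
  rw [← fromBlocks_smul, smul_mulVec, dotProduct_smul, smul_eq_mul, he]

/-- The linear-algebraic identity and inequality in the chain (4.6) of the proof of
Theorem 4.2: with internal inputs `w = M h₂(x)`, `ŵ = M̂ ĥ₂(x̂)`, under the
conditions `[GM; I]ᵀ X̄_cmp [GM; I] ⪯ 0` and `GMH = ĜM̂`, the weighted sum of the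
subsystem quadratic supply rates equals `zᵀ([GM; I]ᵀ X̄_cmp [GM; I])z ≤ 0`, where
`z` is the stacked vector of output mismatches `h_{2i}(x_i) − H_i ĥ_{2i}(x̂_i)`. -/
theorem stmt_16 {N : ℕ} (mi pii phii qi : Fin N → ℕ)
    (G : ∀ i, Matrix (Fin (mi i)) (Fin (pii i)) ℝ)
    (Gh : ∀ i, Matrix (Fin (mi i)) (Fin (phii i)) ℝ)
    (Hm : ∀ i, Matrix (Fin (qi i)) (Fin (qi i)) ℝ)
    (X11 : ∀ i, Matrix (Fin (mi i)) (Fin (mi i)) ℝ)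
    (X12 : ∀ i, Matrix (Fin (mi i)) (Fin (qi i)) ℝ)
    (X21 : ∀ i, Matrix (Fin (qi i)) (Fin (mi i)) ℝ)
    (X22 : ∀ i, Matrix (Fin (qi i)) (Fin (qi i)) ℝ)
    (μ : Fin N → ℝ) (hμ : ∀ i, 0 < μ i)
    (M : Matrix ((i : Fin N) × Fin (pii i)) ((i : Fin N) × Fin (qi i)) ℝ)
    (Mh : Matrix ((i : Fin N) × Fin (phii i)) ((i : Fin N) × Fin (qi i)) ℝ)
    -- the composite supply-rate matrix `X̄_cmp` and the stacked matrix `[GM; I]`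
    (Xcmp : Matrix (((i : Fin N) × Fin (mi i)) ⊕ ((i : Fin N) × Fin (qi i)))
      (((i : Fin N) × Fin (mi i)) ⊕ ((i : Fin N) × Fin (qi i))) ℝ)
    (hXcmp : Xcmp = Matrix.fromBlocks
      (Matrix.blockDiagonal' fun i => μ i • X11 i)
      (Matrix.blockDiagonal' fun i => μ i • X12 i)
      (Matrix.blockDiagonal' fun i => μ i • X21 i)
      (Matrix.blockDiagonal' fun i => μ i • X22 i))
    (B : Matrix (((i : Fin N) × Fin (mi i)) ⊕ ((i : Fin N) × Fin (qi i)))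
      ((i : Fin N) × Fin (qi i)) ℝ)
    (hB : B = Matrix.fromRows (Matrix.blockDiagonal' G * M) 1)
    -- compositionality conditions (4.2) and (4.3)
    (hPSD : (-(Bᵀ * Xcmp * B)).PosSemidef)
    (hGMH : Matrix.blockDiagonal' G * M * Matrix.blockDiagonal' Hm
      = Matrix.blockDiagonal' Gh * Mh) :
    -- for stacked concrete outputs `a = h₂(x)` and abstract outputs `ah = ĥ₂(x̂)`
    ∀ a ah : ((i : Fin N) × Fin (qi i)) → ℝ,
      (∑ i, μ i *
        ((Sum.elim
            (G i *ᵥ (fun b => (M *ᵥ a) ⟨i, b⟩) - Gh i *ᵥ (fun b => (Mh *ᵥ ah) ⟨i, b⟩))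
            (fun b => (a - Matrix.blockDiagonal' Hm *ᵥ ah) ⟨i, b⟩)) ⬝ᵥ
          (Matrix.fromBlocks (X11 i) (X12 i) (X21 i) (X22 i) *ᵥ
            Sum.elim
              (G i *ᵥ (fun b => (M *ᵥ a) ⟨i, b⟩) - Gh i *ᵥ (fun b => (Mh *ᵥ ah) ⟨i, b⟩))
              (fun b => (a - Matrix.blockDiagonal' Hm *ᵥ ah) ⟨i, b⟩))))
      = (a - Matrix.blockDiagonal' Hm *ᵥ ah) ⬝ᵥ
          ((Bᵀ * Xcmp * B) *ᵥ (a - Matrix.blockDiagonal' Hm *ᵥ ah)) ∧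
      (∑ i, μ i *
        ((Sum.elim
            (G i *ᵥ (fun b => (M *ᵥ a) ⟨i, b⟩) - Gh i *ᵥ (fun b => (Mh *ᵥ ah) ⟨i, b⟩))
            (fun b => (a - Matrix.blockDiagonal' Hm *ᵥ ah) ⟨i, b⟩)) ⬝ᵥ
          (Matrix.fromBlocks (X11 i) (X12 i) (X21 i) (X22 i) *ᵥ
            Sum.elim
              (G i *ᵥ (fun b => (M *ᵥ a) ⟨i, b⟩) - Gh i *ᵥ (fun b => (Mh *ᵥ ah) ⟨i, b⟩))
              (fun b => (a - Matrix.blockDiagonal' Hm *ᵥ ah) ⟨i, b⟩)))) ≤ 0 :=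
  stmt_16_general mi pii phii qi G Gh Hm X11 X12 X21 X22 μ M Mh Xcmp hXcmp B hB hPSD hGMH
end

section
/- For a scalar linear stochastic subsystem with dynamics T⁺ = λT + γT_h ν + ηw + βT_e + ς (λ = 1 − 2η − β − γν), the function V(T, T̂) = (T − T̂)² satisfies, for ν = ν̂ (trivial interface) and any w, ŵ: E[V(T⁺, T̂⁺) | ·] − V(T,T̂) ≤ −(1−κ̂)V(T,T̂) + (1+2/π)δ² + [w−ŵ; T−T̂]ᵀ [η²(1+π), ηλ; ηλ, −cη(1+π)] [w−ŵ; T−T̂], provided the scalar matrix inequality [(1+π)λ², λη; λη, (1+π)η²] ⪯ [κ̂ + (−cη(1+π)), ηλ; ηλ, η²(1+π)] holds (i.e., (1+π)λ² ≤ κ̂ − cη(1+π) and (1+π)η² ≤ η²(1+π)), where T̂⁺ = Π(λT̂ + γT_h ν̂ + ηŵ + βT_e + ς) with ‖Π(z) − z‖ ≤ δ. -/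
/-!
Write `s = T − T̂`, `e = w − ŵ`. Since the noise `ς` enters both systems identically, the
increment is `T⁺ − T̂⁺ = λs + ηe + F` with a quantization error `|F| ≤ δ`, pointwise in `ω`.
Expanding the square and bounding the two cross terms with `F` by Young's inequality gives
`(λs + ηe + F)² ≤ (1 + π)λ²s² + (1 + π)η²e² + 2ληes + (1 + 2/π)δ²`, and the `(1,1)` entry of the
matrix inequality turns `(1 + π)λ²s²` into `(κ̂ − cη(1 + π))s²`. The bound is uniform in `ω`,
so it survives integration against the probability measure.
-/

open MeasureTheory Matrix

lemma dotProduct_mulVec_of_fin_two {R : Type*} [CommRing R] (a b c d x y : R) :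
    ![x, y] ⬝ᵥ (Matrix.of ![![a, b], ![c, d]] *ᵥ ![x, y]) =
      a * x ^ 2 + (b + c) * x * y + d * y ^ 2 := by
  simp only [dotProduct, mulVec, Fin.sum_univ_two, of_apply, Matrix.cons_val_zero,
    Matrix.cons_val_one, Matrix.cons_val_fin_one]
  ring

lemma sq_add_add_le_of_abs_le {π x y F δ : ℝ} (hπ : 0 < π) (hF : |F| ≤ δ) :
    (x + y + F) ^ 2 ≤ (1 + π) * x ^ 2 + (1 + π) * y ^ 2 + 2 * x * y + (1 + 2 / π) * δ ^ 2 := by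
  have hxF := two_mul_le_add_mul_sq (a := x) (b := F) hπ
  have hyF := two_mul_le_add_mul_sq (a := y) (b := F) hπ
  have hFδ : (1 + 2 / π) * F ^ 2 ≤ (1 + 2 / π) * δ ^ 2 :=
    mul_le_mul_of_nonneg_left (sq_le_sq' (neg_le_of_abs_le hF) (le_of_abs_le hF)) (by positivity)
  calc (x + y + F) ^ 2 = x ^ 2 + y ^ 2 + 2 * x * y + 2 * x * F + 2 * y * F + F ^ 2 := by ring
    _ ≤ x ^ 2 + y ^ 2 + 2 * x * y + (π * x ^ 2 + π⁻¹ * F ^ 2) + (π * y ^ 2 + π⁻¹ * F ^ 2)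
          + F ^ 2 := by gcongr
    _ = (1 + π) * x ^ 2 + (1 + π) * y ^ 2 + 2 * x * y + (1 + 2 / π) * F ^ 2 := by ring
    _ ≤ _ := by linarith

-- Without integrability of `f` the integral is the junk value `0`, still `≤ C` since `0 ≤ f ≤ C`.
lemma integral_le_of_nonneg_of_le {Ω : Type*} {_ : MeasurableSpace Ω} {μ : Measure Ω}
    [IsProbabilityMeasure μ] {f : Ω → ℝ} {C : ℝ} (hf : 0 ≤ f) (hfC : ∀ ω, f ω ≤ C) :
    ∫ ω, f ω ∂μ ≤ C :=
  (integral_mono_of_nonneg (ae_of_all _ hf) (integrable_const C) (ae_of_all _ hfC)).trans_eq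
    (by simp)

theorem stmt_17_general {Ω : Type*} {mΩ : MeasurableSpace Ω} (μ : Measure Ω)
    [IsProbabilityMeasure μ] (ς : Ω → ℝ)
    (η β γ Th Te κhat pihat c δ : ℝ)
    (hpi : 0 < pihat)
    (Pi : ℝ → ℝ) (hPi : ∀ z, |Pi z - z| ≤ δ)
    (ν : ℝ) (lam : ℝ)
    (hLoewner :
      ((Matrix.of ![![κhat + (-(c * η * (1 + pihat))), η * lam],
                    ![η * lam, η ^ 2 * (1 + pihat)]]) -
       (Matrix.of ![![(1 + pihat) * lam ^ 2, lam * η],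
                    ![lam * η, (1 + pihat) * η ^ 2]])).PosSemidef) :
    ∀ T That w wh : ℝ,
      (∫ ω, ((lam * T + γ * Th * ν + η * w + β * Te + ς ω) -
              Pi (lam * That + γ * Th * ν + η * wh + β * Te + ς ω)) ^ 2 ∂μ)
          - (T - That) ^ 2
        ≤ -(1 - κhat) * (T - That) ^ 2 + (1 + 2 / pihat) * δ ^ 2 +
          (![w - wh, T - That] ⬝ᵥ
            ((Matrix.of ![![η ^ 2 * (1 + pihat), η * lam],
                          ![η * lam, -(c * η * (1 + pihat))]]) *ᵥ
              ![w - wh, T - That])) := by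
  intro T That w wh
  have hlam : (1 + pihat) * lam ^ 2 ≤ κhat + -(c * η * (1 + pihat)) := by
    have h00 := hLoewner.diag_nonneg (i := 0)
    simp only [Matrix.sub_apply, of_apply, Matrix.cons_val_zero] at h00
    linarith
  have hlam_s : (1 + pihat) * (lam * (T - That)) ^ 2
      ≤ (κhat + -(c * η * (1 + pihat))) * (T - That) ^ 2 := by
    rw [mul_pow, ← mul_assoc]
    exact mul_le_mul_of_nonneg_right hlam (sq_nonneg _)
  have hstep : ∀ ω, ((lam * T + γ * Th * ν + η * w + β * Te + ς ω) -
      Pi (lam * That + γ * Th * ν + η * wh + β * Te + ς ω)) ^ 2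
      ≤ (1 + pihat) * (lam * (T - That)) ^ 2 + (1 + pihat) * (η * (w - wh)) ^ 2
        + 2 * (lam * (T - That)) * (η * (w - wh)) + (1 + 2 / pihat) * δ ^ 2 := by
    intro ω
    set z := lam * That + γ * Th * ν + η * wh + β * Te + ς ω
    have hF : |-(Pi z - z)| ≤ δ := (abs_neg _).le.trans (hPi z)
    convert sq_add_add_le_of_abs_le hpi hF using 2
    ring
  have hint := integral_le_of_nonneg_of_le (μ := μ) (fun ω => sq_nonneg _) hstep
  rw [dotProduct_mulVec_of_fin_two]
  linear_combination hint + hlam_s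

/-- For the scalar room-temperature subsystem `T⁺ = λT + γT_hν + ηw + βT_e + ς`,
the function `V(T, T̂) = (T − T̂)²` satisfies the storage-function inequality
`E[V(T⁺, T̂⁺)] − V(T, T̂) ≤ −(1 − κ̂)V(T, T̂) + (1 + 2/π)δ² + uᵀ X̄ u`,
`u = [w − ŵ; T − T̂]`, with trivial interface `ν = ν̂`, provided the scalar
matrix inequality holds and `T̂⁺ = Π(λT̂ + γT_hν̂ + ηŵ + βT_e + ς)` with
`|Π(z) − z| ≤ δ`. -/
theorem stmt_17 {Ω : Type*} {mΩ : MeasurableSpace Ω} (μ : Measure Ω)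
    [IsProbabilityMeasure μ] (ς : Ω → ℝ) (hς : Measurable ς)
    (η β γ Th Te κhat pihat c δ : ℝ)
    (hκ0 : 0 < κhat) (hκ1 : κhat < 1) (hpi : 0 < pihat) (hc : 0 < c) (hδ : 0 ≤ δ)
    (Pi : ℝ → ℝ) (hPimeas : Measurable Pi) (hPi : ∀ z, |Pi z - z| ≤ δ)
    (ν : ℝ) (lam : ℝ) (hlam : lam = 1 - 2 * η - β - γ * ν)
    (hLoewner :
      ((Matrix.of ![![κhat + (-(c * η * (1 + pihat))), η * lam],
                    ![η * lam, η ^ 2 * (1 + pihat)]]) -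
       (Matrix.of ![![(1 + pihat) * lam ^ 2, lam * η],
                    ![lam * η, (1 + pihat) * η ^ 2]])).PosSemidef) :
    ∀ T That w wh : ℝ,
      (∫ ω, ((lam * T + γ * Th * ν + η * w + β * Te + ς ω) -
              Pi (lam * That + γ * Th * ν + η * wh + β * Te + ς ω)) ^ 2 ∂μ)
          - (T - That) ^ 2
        ≤ -(1 - κhat) * (T - That) ^ 2 + (1 + 2 / pihat) * δ ^ 2 +
          (![w - wh, T - That] ⬝ᵥ
            ((Matrix.of ![![η ^ 2 * (1 + pihat), η * lam],
                          ![η * lam, -(c * η * (1 + pihat))]]) *ᵥ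
              ![w - wh, T - That])) :=
  stmt_17_general (mΩ := mΩ) μ ς η β γ Th Te κhat pihat c δ hpi Pi hPi ν lam hLoewner
end
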